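/- Let n ≥ 3, let A, a ∈ ℝ, and define F(x₁,…,xₙ) = ((x₁)² + … + (xₙ)² + A)/(x₁ + … + xₙ + a) on the set where x₁ + … + xₙ + a ≠ 0. Then F is irreducible on every nonempty connected open subset U of this set: for every permutation σ of {1,…,n} and every k with 2 ≤ k ≤ n−1, there exist no C² functions h of k variables and g of n−k+1 variables such that F(x₁,…,xₙ) = g(h(x_{σ(1)},…,x_{σ(k)}), x_{σ(k+1)},…,x_{σ(n)}) for all x ∈ U. -/

import Mathlib

/-!
If `F = g (h y, z)`, where `y` is the first block of variables and `z` the rest, then for every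
variable `x_c` of the first block `∂_c F = ∂₁g (h y, z) · ∂_c h y`, so the cross products
`∂_i F (x) ∂_j F (x') - ∂_j F (x) ∂_i F (x')` vanish whenever `x` and `x'` share the first block.
For `F = (∑ xₗ² + A) / (∑ xₗ + a)` one has
`∂_c F = (2 x_c (∑ xₗ + a) - (∑ xₗ² + A)) / (∑ xₗ + a)²`, and comparing `x` with `x ± u e_m`
for a second-block variable `x_m` gives `(x_i - x_j) (∑ xₗ + a) u² = 0`. Hence `x_i = x_j` on all
of `U`, which a nonempty open set cannot satisfy.
-/

open Filter Topology

section Sums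

variable {ι R : Type*} [Fintype ι] [DecidableEq ι] [CommRing R]

theorem sum_add_smul_single (x : ι → R) (c : ι) (s : R) :
    ∑ i, (x + s • Pi.single c 1 : ι → R) i = ∑ i, x i + s := by
  simp [Finset.sum_add_distrib, Pi.single_apply]

theorem sum_sq_add_smul_single (x : ι → R) (c : ι) (s : R) :
    ∑ i, (x + s • Pi.single c 1 : ι → R) i ^ 2 = ∑ i, x i ^ 2 + 2 * s * x c + s ^ 2 := by
  simp only [Pi.add_apply, Pi.smul_apply, Pi.single_apply, smul_eq_mul, mul_ite, mul_one, mul_zero,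
    add_sq, ite_pow, ne_eq, OfNat.ofNat_ne_zero, not_false_eq_true, zero_pow,
    Finset.sum_add_distrib, Finset.sum_ite_eq', Finset.mem_univ, ↓reduceIte]
  ring

end Sums

section QuadRatio

variable {ι : Type*} [Fintype ι] [DecidableEq ι]

noncomputable def quadRatio (A a : ℝ) (x : ι → ℝ) : ℝ :=
  ((∑ i, x i ^ 2) + A) / ((∑ i, x i) + a)

theorem quadRatio_add_smul_single (A a : ℝ) (x : ι → ℝ) (c : ι) (s : ℝ) :
    quadRatio A a (x + s • Pi.single c 1) =
      (∑ i, x i ^ 2 + A + s * (2 * x c + s)) / (∑ i, x i + a + s) := by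
  rw [quadRatio, sum_add_smul_single, sum_sq_add_smul_single]
  ring

theorem fderiv_quadRatio_single (A a : ℝ) {x : ι → ℝ} (hx : ∑ i, x i + a ≠ 0) (c : ι) :
    fderiv ℝ (quadRatio A a) x (Pi.single c 1) =
      (2 * x c * (∑ i, x i + a) - (∑ i, x i ^ 2 + A)) / (∑ i, x i + a) ^ 2 := by
  have hdiff : DifferentiableAt ℝ (quadRatio A a) x := by
    unfold quadRatio
    fun_prop (disch := exact hx)
  have hnum : HasDerivAt (fun s => ∑ i, x i ^ 2 + A + s * (2 * x c + s)) (2 * x c) 0 := by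
    simpa using ((hasDerivAt_id (0 : ℝ)).mul ((hasDerivAt_id 0).const_add (2 * x c))).const_add
      (∑ i, x i ^ 2 + A)
  have hden : HasDerivAt (fun s => ∑ i, x i + a + s) 1 0 := by
    simpa using (hasDerivAt_id (0 : ℝ)).const_add (∑ i, x i + a)
  have hline : HasLineDerivAt ℝ (quadRatio A a)
      ((2 * x c * (∑ i, x i + a) - (∑ i, x i ^ 2 + A)) / (∑ i, x i + a) ^ 2) x
      (Pi.single c 1) := by
    unfold HasLineDerivAt
    simp only [quadRatio_add_smul_single]
    simpa using hnum.fun_div hden (by simpa using hx)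
  rw [← hdiff.lineDeriv_eq_fderiv, hline.lineDeriv]

theorem numerator_relation_of_fderiv_quadRatio_comm {A a : ℝ} {p : ι → ℝ} {i j m : ι}
    (him : i ≠ m) (hjm : j ≠ m) {t : ℝ} (hp : ∑ l, p l + a ≠ 0)
    (hpt : ∑ l, (p + t • Pi.single m 1 : ι → ℝ) l + a ≠ 0)
    (h : fderiv ℝ (quadRatio A a) (p + t • Pi.single m 1) (Pi.single i 1) *
        fderiv ℝ (quadRatio A a) p (Pi.single j 1) =
      fderiv ℝ (quadRatio A a) (p + t • Pi.single m 1) (Pi.single j 1) *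
        fderiv ℝ (quadRatio A a) p (Pi.single i 1)) :
    (2 * p i * (∑ l, p l + a + t) - (∑ l, p l ^ 2 + A + t * (2 * p m + t))) *
        (2 * p j * (∑ l, p l + a) - (∑ l, p l ^ 2 + A)) =
      (2 * p j * (∑ l, p l + a + t) - (∑ l, p l ^ 2 + A + t * (2 * p m + t))) *
        (2 * p i * (∑ l, p l + a) - (∑ l, p l ^ 2 + A)) := by
  have hpi : (p + t • Pi.single m 1 : ι → ℝ) i = p i := by simp [him]
  have hpj : (p + t • Pi.single m 1 : ι → ℝ) j = p j := by simp [hjm]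
  rw [fderiv_quadRatio_single _ _ hpt, fderiv_quadRatio_single _ _ hpt,
    fderiv_quadRatio_single _ _ hp, fderiv_quadRatio_single _ _ hp, hpi, hpj,
    sum_add_smul_single, sum_sq_add_smul_single] at h
  rw [sum_add_smul_single] at hpt
  field_simp at h
  linear_combination h

theorem apply_eq_of_fderiv_quadRatio_comm {A a : ℝ} {U : Set (ι → ℝ)}
    (hU : ∀ q ∈ U, ∑ l, q l + a ≠ 0) {p : ι → ℝ} (hp : p ∈ U) {i j m : ι} (him : i ≠ m)
    (hjm : j ≠ m) {u : ℝ} (hu : u ≠ 0) (hpu : p + u • Pi.single m 1 ∈ U)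
    (hpu' : p + (-u) • Pi.single m 1 ∈ U)
    (hcomm : ∀ t : ℝ, p + t • Pi.single m 1 ∈ U →
      fderiv ℝ (quadRatio A a) (p + t • Pi.single m 1) (Pi.single i 1) *
          fderiv ℝ (quadRatio A a) p (Pi.single j 1) =
        fderiv ℝ (quadRatio A a) (p + t • Pi.single m 1) (Pi.single j 1) *
          fderiv ℝ (quadRatio A a) p (Pi.single i 1)) :
    p i = p j := by
  have hpos := numerator_relation_of_fderiv_quadRatio_comm him hjm (hU p hp) (hU _ hpu)
    (hcomm u hpu)
  have hneg := numerator_relation_of_fderiv_quadRatio_comm him hjm (hU p hp) (hU _ hpu')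
    (hcomm (-u) hpu')
  have : (p i - p j) * (∑ l, p l + a) * u ^ 2 = 0 := by
    linear_combination (1 / 4 : ℝ) * hpos + (1 / 4 : ℝ) * hneg
  simpa [hU p hp, hu, sub_eq_zero] using this

end QuadRatio

section Decomposition

variable {E Y Z : Type*} [NormedAddCommGroup E] [NormedSpace ℝ E] [NormedAddCommGroup Y]
  [NormedSpace ℝ Y] [NormedAddCommGroup Z] [NormedSpace ℝ Z] {F : E → ℝ} {h : Y → ℝ}
  {g : ℝ × Z → ℝ} (P : E →L[ℝ] Y) (R : E →L[ℝ] Z)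

theorem fderiv_apply_eq_mul_of_eventuallyEq_comp {x : E}
    (hF : F =ᶠ[𝓝 x] fun y => g (h (P y), R y)) (hh : DifferentiableAt ℝ h (P x))
    (hg : DifferentiableAt ℝ g (h (P x), R x)) {v : E} (hv : R v = 0) :
    fderiv ℝ F x v = fderiv ℝ g (h (P x), R x) (1, 0) * fderiv ℝ h (P x) (P v) := by
  have hcomp : HasFDerivAt (fun y => g (h (P y), R y)) _ x := hg.hasFDerivAt.comp x
    ((hh.hasFDerivAt.comp x P.hasFDerivAt).prodMk R.hasFDerivAt)
  have hsmul : (fderiv ℝ h (P x) (P v), (0 : Z)) =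
      fderiv ℝ h (P x) (P v) • ((1 : ℝ), (0 : Z)) := by
    simp
  rw [hF.fderiv_eq, hcomp.fderiv]
  simp only [ContinuousLinearMap.comp_apply, ContinuousLinearMap.prod_apply, hv, hsmul, map_smul,
    smul_eq_mul, mul_comm]

theorem fderiv_mul_fderiv_comm_of_eqOn_comp {U : Set E} (hU : IsOpen U)
    (hF : ∀ y ∈ U, F y = g (h (P y), R y)) (hh : Differentiable ℝ h) (hg : Differentiable ℝ g)
    {x x' : E} (hx : x ∈ U) (hx' : x' ∈ U) (hxx' : P x = P x') {v w : E} (hv : R v = 0)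
    (hw : R w = 0) :
    fderiv ℝ F x v * fderiv ℝ F x' w = fderiv ℝ F x w * fderiv ℝ F x' v := by
  have hchain {y : E} (hy : y ∈ U) {v : E} (hv : R v = 0) :=
    fderiv_apply_eq_mul_of_eventuallyEq_comp P R (eventually_of_mem (hU.mem_nhds hy) hF)
      (hh _) (hg _) hv
  rw [hchain hx hv, hchain hx hw, hchain hx' hv, hchain hx' hw, hxx']
  ring

end Decomposition

theorem IsOpen.exists_ne_zero_add_smul_mem {E : Type*} [NormedAddCommGroup E] [NormedSpace ℝ E]
    {U : Set E} (hU : IsOpen U) {p : E} (hp : p ∈ U) (v : E) :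
    ∃ u : ℝ, u ≠ 0 ∧ p + u • v ∈ U ∧ p + (-u) • v ∈ U := by
  have hline : ∀ᶠ u : ℝ in 𝓝 0, p + u • v ∈ U :=
    (by fun_prop : Continuous fun u : ℝ => p + u • v).continuousAt.preimage_mem_nhds
      (by simpa using hU.mem_nhds hp)
  have hline' : ∀ᶠ u : ℝ in 𝓝 0, p + (-u) • v ∈ U :=
    (continuous_neg.tendsto' (0 : ℝ) 0 neg_zero).eventually hline
  obtain ⟨u, ⟨hu, hu'⟩, hne⟩ :=
    ((hline.and hline').filter_mono nhdsWithin_le_nhds |>.and self_mem_nhdsWithin).exists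
      (f := 𝓝[≠] (0 : ℝ))
  exact ⟨u, hne, hu, hu'⟩

/-- The `n`-quasigroup
`F(x) = ((x₁)² + … + (xₙ)² + A)/(x₁ + … + xₙ + a)` is irreducible on every
nonempty connected open subset of `{x : x₁ + … + xₙ + a ≠ 0}`: for every
permutation `σ` and every `k` with `2 ≤ k ≤ n−1` there is no decomposition
`F(x) = g(h(x_{σ(1)},…,x_{σ(k)}), x_{σ(k+1)},…,x_{σ(n)})` with C² `g`, `h`. -/
theorem stmt_9 (n : ℕ) (A a : ℝ)
    (F : (Fin n → ℝ) → ℝ)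
    (hF : ∀ x, F x = ((∑ i, (x i) ^ 2) + A) / ((∑ i, x i) + a))
    (U : Set (Fin n → ℝ)) (hUopen : IsOpen U) (hUconn : IsConnected U)
    (hden : ∀ x ∈ U, (∑ i, x i) + a ≠ 0) :
    ∀ (σ : Equiv.Perm (Fin n)) (k : ℕ) (hk2 : 2 ≤ k) (hkn : k ≤ n - 1),
      ¬ ∃ (h : (Fin k → ℝ) → ℝ) (g : ℝ × (Fin (n - k) → ℝ) → ℝ),
          ContDiff ℝ 2 h ∧ ContDiff ℝ 2 g ∧
          ∀ x ∈ U, F x = g (h (fun i => x (σ (Fin.castLE (by omega) i))),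
            fun j => x (σ ⟨k + j.1, by have := j.2; omega⟩)) := by
  rintro σ k hk2 hkn ⟨h, g, hh, hg, hdec⟩
  have hkn' : k ≤ n := by omega
  let P : (Fin n → ℝ) →L[ℝ] (Fin k → ℝ) := .pi fun c => .proj (σ (Fin.castLE hkn' c))
  let R : (Fin n → ℝ) →L[ℝ] (Fin (n - k) → ℝ) := .pi fun c => .proj (σ ⟨k + c, by omega⟩)
  set i := σ (Fin.castLE hkn' ⟨0, by omega⟩)
  set j := σ (Fin.castLE hkn' ⟨1, by omega⟩)
  set m := σ ⟨k, by omega⟩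
  have hij : i ≠ j := σ.injective.ne (Fin.ne_of_val_ne zero_ne_one)
  have him : i ≠ m := σ.injective.ne (Fin.ne_of_val_ne (show 0 ≠ k by omega))
  have hjm : j ≠ m := σ.injective.ne (Fin.ne_of_val_ne (show 1 ≠ k by omega))
  have hR (c : Fin k) : R (Pi.single (σ (Fin.castLE hkn' c)) 1) = 0 := by
    ext d
    exact Pi.single_eq_of_ne (σ.injective.ne (Fin.ne_of_val_ne (show k + d ≠ c by omega))) _
  have hP : P (Pi.single m 1) = 0 := by
    ext d
    exact Pi.single_eq_of_ne (σ.injective.ne (Fin.ne_of_val_ne (show d.1 ≠ k by omega))) _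
  obtain rfl : F = quadRatio A a := funext hF
  have hcoord_eq : ∀ p ∈ U, p i = p j := by
    intro p hp
    obtain ⟨u, hu, hpu, hpu'⟩ := hUopen.exists_ne_zero_add_smul_mem hp (Pi.single m 1)
    refine apply_eq_of_fderiv_quadRatio_comm hden hp him hjm hu hpu hpu' fun t ht =>
      fderiv_mul_fderiv_comm_of_eqOn_comp P R hUopen hdec (hh.differentiable (by norm_num))
        (hg.differentiable (by norm_num)) ht hp ?_ (hR _) (hR _)
    rw [map_add, map_smul, hP, smul_zero, add_zero]
  obtain ⟨p, hp⟩ := hUconn.nonempty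
  obtain ⟨u, hu, hpu, -⟩ := hUopen.exists_ne_zero_add_smul_mem hp (Pi.single i 1)
  exact hu (by simpa [hij, hcoord_eq p hp] using hcoord_eq _ hpu)
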